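/- arXiv:2003.09619 — 3 statements merged into one kernel-verified Lean document; each statement's English description precedes it below -/
import Mathlib

section
/- Let H be a real Hilbert space, K ⊆ H a nonempty closed convex set with metric projection π : H → H, and 𝔸 : H → H a bounded symmetric coercive linear operator with coercivity constant γ > 0. Let λ > 0, T > 0, and for i = 1, 2 let wᵢ ∈ L²(0,T;H) and let σᵢ : [0,T] → H be an H¹(0,T;H)-curve with derivative σᵢ' such that σ₁(0) = σ₂(0) and, for almost every t ∈ (0,T), 𝔸σᵢ'(t) + λ⁻¹(σᵢ(t) − π(σᵢ(t))) = wᵢ(t). Then for every t ∈ [0,T]: ‖σ₁(t) − σ₂(t)‖ ≤ (2/γ) ∫₀ᵀ ‖w₁(s) − w₂(s)‖ ds. -/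
open RealInnerProductSpace MeasureTheory

/-- `σ : [0,T] → H` is an `H¹(0,T;H)`-curve with derivative `σ'`: the derivative is
Bochner measurable and square integrable on `(0,T)`, and
`σ(t) = σ(0) + ∫₀ᵗ σ'(s) ds` for all `t ∈ [0,T]`. -/
def IsH1Curve {H : Type*} [NormedAddCommGroup H] [NormedSpace ℝ H] [CompleteSpace H]
    (T : ℝ) (σ σ' : ℝ → H) : Prop :=
  MemLp σ' 2 (volume.restrict (Set.Ioo 0 T)) ∧
    ∀ t ∈ Set.Icc 0 T, σ t = σ 0 + ∫ s in (0:ℝ)..t, σ' s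

/-!
With `ρ = σ₁ - σ₂`, subtracting the two flow rules and testing with `ρ` gives, by monotonicity of
`x ↦ x - π x`, the a.e. inequality `⟪𝔸ρ', ρ⟫ ≤ ⟪w₁ - w₂, ρ⟫`. As `𝔸` is symmetric,
`⟪𝔸ρ(t), ρ(t)⟫ = 2 ∫₀ᵗ ⟪𝔸ρ', ρ⟫` (Fubini on the square `[0,t]²`, split along the diagonal). At a
point `t₀` where `‖ρ‖` is maximal, coercivity then yields
`γ ‖ρ(t₀)‖² ≤ 2 ‖ρ(t₀)‖ ∫₀ᵀ ‖w₁ - w₂‖`.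
-/

open Set

theorem MeasureTheory.MemLp.intervalIntegrable_of_restrict_Ioo {E : Type*} [NormedAddCommGroup E]
    {f : ℝ → E} {p : ENNReal} {a b : ℝ} (hp : 1 ≤ p) (hab : a ≤ b)
    (hf : MemLp f p (volume.restrict (Ioo a b))) : IntervalIntegrable f volume a b := by
  rw [intervalIntegrable_iff_integrableOn_Ioc_of_le hab, integrableOn_Ioc_iff_integrableOn_Ioo]
  exact hf.integrable hp

theorem IsH1Curve.sub {H : Type*} [NormedAddCommGroup H] [NormedSpace ℝ H] [CompleteSpace H]
    {T : ℝ} {σ₁ σ₂ σ₁' σ₂' : ℝ → H} (h₁ : IsH1Curve T σ₁ σ₁') (h₂ : IsH1Curve T σ₂ σ₂') :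
    IsH1Curve T (σ₁ - σ₂) (σ₁' - σ₂') := by
  refine ⟨h₁.1.sub h₂.1, fun t ht => ?_⟩
  have hT : 0 ≤ T := ht.1.trans ht.2
  have hsub : uIcc 0 t ⊆ uIcc 0 T := uIcc_subset_uIcc_left (by rwa [uIcc_of_le hT])
  have hi₁ := (h₁.1.intervalIntegrable_of_restrict_Ioo one_le_two hT).mono_set hsub
  have hi₂ := (h₂.1.intervalIntegrable_of_restrict_Ioo one_le_two hT).mono_set hsub
  simp only [Pi.sub_apply]
  rw [h₁.2 t ht, h₂.2 t ht, intervalIntegral.integral_sub hi₁ hi₂]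
  abel

theorem ae_prod_fst_ne_snd {μ ν : Measure ℝ} [SFinite ν] [NullSingletonClass ν] :
    ∀ᵐ p ∂μ.prod ν, p.1 ≠ p.2 :=
  (Measure.ae_prod_iff_ae_ae measurableSet_diagonal.compl).2 <|
    ae_of_all _ fun x => by simp [ae_iff]

theorem integral_prod_eq_two_smul_integral_Iio {E : Type*} [NormedAddCommGroup E]
    [NormedSpace ℝ E] {μ : Measure ℝ} [SFinite μ] [NullSingletonClass μ] {F : ℝ × ℝ → E}
    (hF : Integrable F (μ.prod μ)) (hsymm : ∀ p, F p.swap = F p) :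
    ∫ p, F p ∂μ.prod μ = (2 : ℝ) • ∫ s, ∫ u in Iio s, F (s, u) ∂μ ∂μ := by
  set S : Set (ℝ × ℝ) := {p | p.2 < p.1}
  have hS : MeasurableSet S := measurableSet_lt measurable_snd measurable_fst
  have hlower : ∫ p in S, F p ∂μ.prod μ = ∫ s, ∫ u in Iio s, F (s, u) ∂μ ∂μ := by
    rw [← integral_indicator hS, integral_prod _ (hF.indicator hS)]
    congr 1 with s
    rw [← integral_indicator measurableSet_Iio]
    rfl
  have hupper : ∫ p in Sᶜ, F p ∂μ.prod μ = ∫ p in S, F p ∂μ.prod μ := by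
    have hswap : (Sᶜ : Set (ℝ × ℝ)) =ᵐ[μ.prod μ] (Prod.swap ⁻¹' S : Set (ℝ × ℝ)) := by
      refine Filter.eventuallyEq_set.2 ?_
      filter_upwards [ae_prod_fst_ne_snd] with p hp
      simp only [S, mem_compl_iff, mem_preimage, mem_ofPred_eq, Prod.fst_swap, Prod.snd_swap,
        not_lt]
      exact ⟨fun h => h.lt_of_ne hp, le_of_lt⟩
    calc ∫ p in Sᶜ, F p ∂μ.prod μ = ∫ p in Prod.swap ⁻¹' S, F p.swap ∂μ.prod μ := by
          simp only [hsymm, setIntegral_congr_set hswap]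
      _ = ∫ p in S, F p ∂μ.prod μ :=
          Measure.measurePreserving_swap.setIntegral_preimage_emb
            MeasurableEquiv.prodComm.measurableEmbedding F S
  rw [← integral_add_compl hS hF, hupper, hlower, two_smul]

section InnerProductSpace

variable {H : Type*} [NormedAddCommGroup H] [InnerProductSpace ℝ H]

theorem inner_sub_proj_sub_sub_proj_nonneg {K : Set H} {π : H → H} (hπK : ∀ x, π x ∈ K)
    (hπ : ∀ x, ∀ k ∈ K, ⟪x - π x, k - π x⟫ ≤ 0) (x y : H) :
    0 ≤ ⟪(x - π x) - (y - π y), x - y⟫ := by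
  have hx : 0 ≤ ⟪x - π x, π x - π y⟫ := by
    rw [← neg_sub (π y) (π x), inner_neg_right]
    linarith [hπ x (π y) (hπK y)]
  have hy : ⟪y - π y, π x - π y⟫ ≤ 0 := hπ y (π x) (hπK x)
  have hsplit : x - y = ((x - π x) - (y - π y)) + (π x - π y) := by abel
  rw [hsplit, inner_add_right, inner_sub_left (x - π x) (y - π y) (π x - π y)]
  linarith [real_inner_self_nonneg (x := (x - π x) - (y - π y))]

theorem inner_sub_le_inner_sub_of_add_smul_eq {a₁ a₂ y₁ y₂ w₁ w₂ z : H} {c : ℝ} (hc : 0 ≤ c)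
    (h₁ : a₁ + c • y₁ = w₁) (h₂ : a₂ + c • y₂ = w₂) (hy : 0 ≤ ⟪y₁ - y₂, z⟫) :
    ⟪a₁ - a₂, z⟫ ≤ ⟪w₁ - w₂, z⟫ := by
  have hw : w₁ - w₂ = (a₁ - a₂) + c • (y₁ - y₂) := by rw [← h₁, ← h₂, smul_sub]; abel
  rw [hw, inner_add_left, real_inner_smul_left]
  exact le_add_of_nonneg_right (mul_nonneg hc hy)

end InnerProductSpace

section Energy

variable {H : Type*} [NormedAddCommGroup H] [InnerProductSpace ℝ H] {A : H →L[ℝ] H}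

theorem MeasureTheory.Integrable.inner_map_prod {α : Type*} [MeasurableSpace α]
    {μ : Measure α} [SFinite μ] {g : α → H} (hg : Integrable g μ) :
    Integrable (fun p : α × α => ⟪A (g p.1), g p.2⟫) (μ.prod μ) := by
  refine ((hg.norm.const_mul ‖A‖).mul_prod hg.norm).mono'
    ((A.continuous.comp_aestronglyMeasurable hg.1.comp_fst).inner hg.1.comp_snd)
    (ae_of_all _ fun p => ?_)
  calc ‖⟪A (g p.1), g p.2⟫‖ ≤ ‖A (g p.1)‖ * ‖g p.2‖ := norm_inner_le_norm _ _
    _ ≤ ‖A‖ * ‖g p.1‖ * ‖g p.2‖ := by gcongr; exact A.le_opNorm _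

theorem integral_prod_inner_map [CompleteSpace H] {α : Type*} [MeasurableSpace α]
    {μ : Measure α} [SFinite μ] {g : α → H} (hg : Integrable g μ) :
    ∫ p, ⟪A (g p.1), g p.2⟫ ∂μ.prod μ = ⟪A (∫ u, g u ∂μ), ∫ u, g u ∂μ⟫ := by
  rw [integral_prod _ hg.inner_map_prod]
  calc ∫ s, ∫ u, ⟪A (g s), g u⟫ ∂μ ∂μ = ∫ s, ⟪∫ u, g u ∂μ, A (g s)⟫ ∂μ := by
        congr 1 with s
        rw [integral_inner hg, real_inner_comm]
    _ = ⟪A (∫ u, g u ∂μ), ∫ u, g u ∂μ⟫ := by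
        rw [integral_inner (A.integrable_comp hg), A.integral_comp_comm hg, real_inner_comm]

variable {g : ℝ → H} {a b : ℝ}

theorem inner_map_intervalIntegral_self [CompleteSpace H] (hA : ∀ x y, ⟪A x, y⟫ = ⟪x, A y⟫)
    (hab : a ≤ b) (hg : IntervalIntegrable g volume a b) :
    ⟪A (∫ u in a..b, g u), ∫ u in a..b, g u⟫ = 2 * ∫ s in a..b, ⟪A (g s), ∫ u in a..s, g u⟫ := by
  have hsymm : ∀ p : ℝ × ℝ, ⟪A (g p.swap.1), g p.swap.2⟫ = ⟪A (g p.1), g p.2⟫ := fun p => by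
    rw [Prod.fst_swap, Prod.snd_swap, hA, real_inner_comm]
  have htriangle : ∫ s in Ioc a b, ∫ u in Iio s ∩ Ioc a b, ⟪A (g s), g u⟫
      = ∫ s in a..b, ⟪A (g s), ∫ u in a..s, g u⟫ := by
    rw [intervalIntegral.integral_of_le hab]
    refine setIntegral_congr_fun measurableSet_Ioc fun s hs => ?_
    have hIoo : Iio s ∩ Ioc a b = Ioo a s := by
      ext u
      exact ⟨fun hu => ⟨hu.2.1, hu.1⟩, fun hu => ⟨hu.2, hu.1, hu.2.le.trans hs.2⟩⟩
    rw [hIoo, Measure.restrict_congr_set Ioo_ae_eq_Ioc, intervalIntegral.integral_of_le hs.1.le]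
    exact integral_inner (hg.1.mono_set (Ioc_subset_Ioc_right hs.2)) _
  rw [intervalIntegral.integral_of_le hab, ← integral_prod_inner_map hg.1,
    integral_prod_eq_two_smul_integral_Iio hg.1.inner_map_prod hsymm, smul_eq_mul]
  simp only [Measure.restrict_restrict measurableSet_Iio]
  rw [htriangle]

theorem IntervalIntegrable.continuousOn_primitive_Icc (hab : a ≤ b)
    (hg : IntervalIntegrable g volume a b) :
    ContinuousOn (fun s => ∫ u in a..s, g u) (Icc a b) := by
  simpa only [uIcc_of_le hab] using
    intervalIntegral.continuousOn_primitive_interval' hg left_mem_uIcc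

theorem IntervalIntegrable.inner_map_primitive (hab : a ≤ b)
    (hg : IntervalIntegrable g volume a b) :
    IntervalIntegrable (fun s => ⟪A (g s), ∫ u in a..s, g u⟫) volume a b := by
  have hρ := hg.continuousOn_primitive_Icc hab
  obtain ⟨C, hC⟩ := isCompact_Icc.exists_bound_of_continuousOn hρ
  refine (intervalIntegrable_iff_integrableOn_Ioc_of_le hab).2 <|
    (hg.1.norm.const_mul (‖A‖ * C)).mono' ?_ ?_
  · exact (A.continuous.comp_aestronglyMeasurable hg.1.1).inner
      ((hρ.mono Ioc_subset_Icc_self).aestronglyMeasurable measurableSet_Ioc)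
  · filter_upwards [ae_restrict_mem measurableSet_Ioc] with s hs
    calc ‖⟪A (g s), ∫ u in a..s, g u⟫‖ ≤ ‖A (g s)‖ * ‖∫ u in a..s, g u‖ :=
          norm_inner_le_norm _ _
      _ ≤ ‖A‖ * ‖g s‖ * C := by
          gcongr
          · exact A.le_opNorm _
          · exact hC s (Ioc_subset_Icc_self hs)
      _ = ‖A‖ * C * ‖g s‖ := by ring

theorem intervalIntegral_inner_map_primitive_le {w : ℝ → H} {M : ℝ} (hab : a ≤ b)
    (hg : IntervalIntegrable g volume a b) (hw : IntervalIntegrable w volume a b)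
    (hgw : ∀ᵐ s ∂volume.restrict (Icc a b),
      ⟪A (g s), ∫ u in a..s, g u⟫ ≤ ⟪w s, ∫ u in a..s, g u⟫)
    (hM : ∀ s ∈ Icc a b, ‖∫ u in a..s, g u‖ ≤ M) :
    ∫ s in a..b, ⟪A (g s), ∫ u in a..s, g u⟫ ≤ (∫ s in a..b, ‖w s‖) * M := by
  rw [← intervalIntegral.integral_mul_const]
  refine intervalIntegral.integral_mono_ae_restrict hab (hg.inner_map_primitive hab)
    (hw.norm.mul_const M) ?_
  filter_upwards [hgw, ae_restrict_mem measurableSet_Icc] with s hs hsI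
  calc ⟪A (g s), ∫ u in a..s, g u⟫ ≤ ⟪w s, ∫ u in a..s, g u⟫ := hs
    _ ≤ ‖w s‖ * ‖∫ u in a..s, g u‖ := real_inner_le_norm _ _
    _ ≤ ‖w s‖ * M := by gcongr; exact hM s hsI

theorem norm_intervalIntegral_le_of_inner_map_le [CompleteSpace H]
    (hA : ∀ x y, ⟪A x, y⟫ = ⟪x, A y⟫) {γ : ℝ} (hγ : 0 < γ)
    (hcoer : ∀ h : H, γ * ‖h‖ ^ 2 ≤ ⟪A h, h⟫) {w : ℝ → H}
    (hg : IntervalIntegrable g volume a b) (hw : IntervalIntegrable w volume a b)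
    (hgw : ∀ᵐ s ∂volume.restrict (Ioo a b),
      ⟪A (g s), ∫ u in a..s, g u⟫ ≤ ⟪w s, ∫ u in a..s, g u⟫) :
    ∀ t ∈ Icc a b, ‖∫ u in a..t, g u‖ ≤ 2 / γ * ∫ s in a..b, ‖w s‖ := by
  intro t ht
  have hab : a ≤ b := ht.1.trans ht.2
  obtain ⟨t₀, ht₀, hmax⟩ := isCompact_Icc.exists_isMaxOn (nonempty_of_mem ht)
    (continuous_norm.comp_continuousOn (hg.continuousOn_primitive_Icc hab))
  set ρ : ℝ → H := fun s => ∫ u in a..s, g u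
  set M := ‖ρ t₀‖
  set C := ∫ s in a..b, ‖w s‖
  have hsub : uIcc a t₀ ⊆ uIcc a b := by
    rw [uIcc_of_le ht₀.1, uIcc_of_le hab]
    exact Icc_subset_Icc_right ht₀.2
  rw [Measure.restrict_congr_set Ioo_ae_eq_Icc] at hgw
  have henergy : γ * M ^ 2 ≤ 2 * (C * M) := calc
    γ * M ^ 2 ≤ ⟪A (ρ t₀), ρ t₀⟫ := hcoer _
    _ = 2 * ∫ s in a..t₀, ⟪A (g s), ρ s⟫ :=
        inner_map_intervalIntegral_self hA ht₀.1 (hg.mono_set hsub)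
    _ ≤ 2 * ((∫ s in a..t₀, ‖w s‖) * M) := by
        gcongr
        exact intervalIntegral_inner_map_primitive_le ht₀.1 (hg.mono_set hsub)
          (hw.mono_set hsub) (ae_restrict_of_ae_restrict_of_subset (Icc_subset_Icc_right ht₀.2) hgw)
          fun s hs => hmax ⟨hs.1, hs.2.trans ht₀.2⟩
    _ ≤ 2 * (C * M) := by
        gcongr
        exact intervalIntegral.integral_mono_interval le_rfl ht₀.1 ht₀.2
          (ae_of_all _ fun _ => norm_nonneg _) hw.norm
  have hC : 0 ≤ C := intervalIntegral.integral_nonneg hab fun _ _ => norm_nonneg _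
  calc ‖ρ t‖ ≤ M := hmax ht
    _ ≤ 2 / γ * C := by
        rw [div_mul_eq_mul_div, le_div_iff₀ hγ]
        nlinarith [norm_nonneg (ρ t₀)]

end Energy

theorem yosida_flow_rule_stability_general
    {H : Type*} [NormedAddCommGroup H] [InnerProductSpace ℝ H] [CompleteSpace H]
    (K : Set H)
    (π : H → H) (hπK : ∀ x, π x ∈ K)
    (hπ : ∀ x, ∀ k ∈ K, ⟪x - π x, k - π x⟫ ≤ 0)
    (A : H →L[ℝ] H) (hAsym : ∀ x y, ⟪A x, y⟫ = ⟪x, A y⟫)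
    (γ : ℝ) (hγ : 0 < γ) (hAcoer : ∀ h : H, γ * ‖h‖ ^ 2 ≤ ⟪A h, h⟫)
    (lam T : ℝ) (hlam : 0 < lam)
    (w₁ w₂ : ℝ → H)
    (hw₁ : MemLp w₁ 2 (volume.restrict (Set.Ioo 0 T)))
    (hw₂ : MemLp w₂ 2 (volume.restrict (Set.Ioo 0 T)))
    (σ₁ σ₂ σ₁' σ₂' : ℝ → H)
    (hσ₁ : IsH1Curve T σ₁ σ₁') (hσ₂ : IsH1Curve T σ₂ σ₂')
    (hinit : σ₁ 0 = σ₂ 0)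
    (heq₁ : ∀ᵐ t ∂(volume.restrict (Set.Ioo 0 T)),
      A (σ₁' t) + lam⁻¹ • (σ₁ t - π (σ₁ t)) = w₁ t)
    (heq₂ : ∀ᵐ t ∂(volume.restrict (Set.Ioo 0 T)),
      A (σ₂' t) + lam⁻¹ • (σ₂ t - π (σ₂ t)) = w₂ t) :
    ∀ t ∈ Set.Icc 0 T,
      ‖σ₁ t - σ₂ t‖ ≤ (2 / γ) * ∫ s in (0:ℝ)..T, ‖w₁ s - w₂ s‖ := by
  intro t ht
  have hT : 0 ≤ T := ht.1.trans ht.2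
  have hρ := hσ₁.sub hσ₂
  have hprim : ∀ s ∈ Icc 0 T, σ₁ s - σ₂ s = ∫ u in (0:ℝ)..s, (σ₁' - σ₂') u := fun s hs => by
    simpa [hinit] using hρ.2 s hs
  rw [hprim t ht]
  refine norm_intervalIntegral_le_of_inner_map_le hAsym hγ hAcoer
    (hρ.1.intervalIntegrable_of_restrict_Ioo one_le_two hT)
    ((hw₁.sub hw₂).intervalIntegrable_of_restrict_Ioo one_le_two hT) ?_ t ht
  filter_upwards [heq₁, heq₂, ae_restrict_mem measurableSet_Ioo] with s h₁ h₂ hs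
  rw [← hprim s (Ioo_subset_Icc_self hs), Pi.sub_apply, Pi.sub_apply, map_sub]
  exact inner_sub_le_inner_sub_of_add_smul_eq (inv_nonneg.2 hlam.le) h₁ h₂
    (inner_sub_proj_sub_sub_proj_nonneg hπK hπ _ _)

/-- Stability estimate for the Yosida-regularized flow rule
`𝔸σ̇ᵢ + λ⁻¹(σᵢ − π(σᵢ)) = wᵢ`: two solutions with equal initial values satisfy
`‖σ₁(t) − σ₂(t)‖ ≤ (2/γ) ∫₀ᵀ ‖w₁ − w₂‖ ds` for every `t ∈ [0,T]`. -/
theorem yosida_flow_rule_stability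
    {H : Type*} [NormedAddCommGroup H] [InnerProductSpace ℝ H] [CompleteSpace H]
    (K : Set H) (hK : K.Nonempty) (hKclosed : IsClosed K) (hKconv : Convex ℝ K)
    (π : H → H) (hπK : ∀ x, π x ∈ K)
    (hπ : ∀ x, ∀ k ∈ K, ⟪x - π x, k - π x⟫ ≤ 0)
    (A : H →L[ℝ] H) (hAsym : ∀ x y, ⟪A x, y⟫ = ⟪x, A y⟫)
    (γ : ℝ) (hγ : 0 < γ) (hAcoer : ∀ h : H, γ * ‖h‖ ^ 2 ≤ ⟪A h, h⟫)
    (lam T : ℝ) (hlam : 0 < lam) (hT : 0 < T)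
    (w₁ w₂ : ℝ → H)
    (hw₁ : MemLp w₁ 2 (volume.restrict (Set.Ioo 0 T)))
    (hw₂ : MemLp w₂ 2 (volume.restrict (Set.Ioo 0 T)))
    (σ₁ σ₂ σ₁' σ₂' : ℝ → H)
    (hσ₁ : IsH1Curve T σ₁ σ₁') (hσ₂ : IsH1Curve T σ₂ σ₂')
    (hinit : σ₁ 0 = σ₂ 0)
    (heq₁ : ∀ᵐ t ∂(volume.restrict (Set.Ioo 0 T)),
      A (σ₁' t) + lam⁻¹ • (σ₁ t - π (σ₁ t)) = w₁ t)
    (heq₂ : ∀ᵐ t ∂(volume.restrict (Set.Ioo 0 T)),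
      A (σ₂' t) + lam⁻¹ • (σ₂ t - π (σ₂ t)) = w₂ t) :
    ∀ t ∈ Set.Icc 0 T,
      ‖σ₁ t - σ₂ t‖ ≤ (2 / γ) * ∫ s in (0:ℝ)..T, ‖w₁ s - w₂ s‖ :=
  yosida_flow_rule_stability_general K π hπK hπ A hAsym γ hγ hAcoer lam T hlam w₁ w₂ hw₁ hw₂ σ₁ σ₂
    σ₁' σ₂' hσ₁ hσ₂ hinit heq₁ heq₂
end

section
/- Let H be a real Hilbert space, 𝒞 ⊆ H a nonempty closed convex set, and 𝔸 : H → H a bounded symmetric coercive linear operator with coercivity constant γ > 0. Let T > 0, let g ∈ L²(0,T;H), and let σ : [0,T] → H be an H¹(0,T;H)-curve with derivative σ' such that, for almost every t ∈ (0,T): σ(t) ∈ 𝒞 and ⟪𝔸σ'(t) − g(t), τ − σ(t)⟫ ≥ 0 for all τ ∈ 𝒞. Then ‖σ'(t)‖ ≤ γ⁻¹ ‖g(t)‖ for almost every t ∈ (0,T); in particular, (∫₀ᵀ‖σ'(t)‖²dt)^{1/2} ≤ γ⁻¹ (∫₀ᵀ‖g(t)‖²dt)^{1/2}. -/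
/-!
At almost every `t ∈ (0,T)` the curve `σ` is differentiable with derivative `σ' t`
(Lebesgue differentiation), and `σ` stays in `𝒞` near `t` (it is continuous and `𝒞` is closed).
Testing the variational inequality with `τ = σ y` for `y` near `t` shows that
`y ↦ ⟪A σ'(t) - g(t), σ y⟫` has a local minimum at `t`, so `⟪A σ'(t) - g(t), σ'(t)⟫ = 0`.
Coercivity then gives `γ‖σ'(t)‖² ≤ ⟪g(t), σ'(t)⟫ ≤ ‖g(t)‖‖σ'(t)‖`, and the `L²` bound
follows by integrating the square of the pointwise one.
-/

open RealInnerProductSpace MeasureTheory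

open Set Filter Topology

theorem IsOpen.forall_mem_of_ae_mem {α β : Type*} [TopologicalSpace α] [MeasurableSpace α]
    [OpensMeasurableSpace α] [TopologicalSpace β] {μ : Measure α} [μ.IsOpenPosMeasure]
    {U : Set α} {s : Set β} {f : α → β} (hU : IsOpen U) (hs : IsClosed s) (hf : ContinuousOn f U)
    (h : ∀ᵐ x ∂μ.restrict U, f x ∈ s) : ∀ x ∈ U, f x ∈ s := by
  have hbad : IsOpen (U ∩ f ⁻¹' sᶜ) := hf.isOpen_inter_preimage hU hs.isOpen_compl
  have hnull : μ (U ∩ f ⁻¹' sᶜ) = 0 := by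
    have h' := ae_iff.mp h
    rw [Measure.restrict_apply' hU.measurableSet, inter_comm] at h'
    exact h'
  intro x hx
  by_contra hxs
  exact ((hbad.measure_eq_zero_iff μ).mp hnull).subset ⟨hx, hxs⟩

namespace IsH1Curve

variable {H : Type*} [NormedAddCommGroup H] [NormedSpace ℝ H] [CompleteSpace H]
  {T : ℝ} {σ σ' : ℝ → H}

theorem intervalIntegrable (hσ : IsH1Curve T σ σ') (hT : 0 ≤ T) :
    IntervalIntegrable σ' volume 0 T :=
  (intervalIntegrable_iff_integrableOn_Ioo_of_le hT).mpr (hσ.1.integrable one_le_two)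

theorem continuousOn (hσ : IsH1Curve T σ σ') (hT : 0 ≤ T) : ContinuousOn σ (Icc 0 T) := by
  have hprim := intervalIntegral.continuousOn_primitive_interval
    ((intervalIntegrable_iff').mp (hσ.intervalIntegrable hT))
  rw [uIcc_of_le hT] at hprim
  exact (continuousOn_const.add hprim).congr hσ.2

theorem ae_hasDerivAt (hσ : IsH1Curve T σ σ') (hT : 0 ≤ T) :
    ∀ᵐ t ∂volume.restrict (Ioo 0 T), HasDerivAt σ (σ' t) t := by
  filter_upwards [ae_restrict_of_ae (hσ.intervalIntegrable hT).ae_hasDerivAt_integral,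
    ae_restrict_mem measurableSet_Ioo] with t hderiv ht
  have hIcc : Icc 0 T ⊆ uIcc 0 T := (uIcc_of_le hT).ge
  refine ((hderiv (hIcc (Ioo_subset_Icc_self ht)) 0 (hIcc ⟨le_rfl, hT⟩)).const_add
    (σ 0)).congr_of_eventuallyEq ?_
  filter_upwards [Ioo_mem_nhds ht.1 ht.2] with y hy using hσ.2 y (Ioo_subset_Icc_self hy)

end IsH1Curve

theorem HasDerivAt.inner_eq_zero_of_eventually_inner_sub_nonneg
    {H : Type*} [NormedAddCommGroup H] [InnerProductSpace ℝ H]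
    {f : ℝ → H} {f' v : H} {t : ℝ} (hf : HasDerivAt f f' t)
    (hmin : ∀ᶠ y in 𝓝 t, 0 ≤ ⟪v, f y - f t⟫) : ⟪v, f'⟫ = 0 := by
  have hderiv : HasDerivAt (fun y => ⟪v, f y⟫) ⟪v, f'⟫ t :=
    (innerSL ℝ v).hasFDerivAt.comp_hasDerivAt t hf
  refine IsLocalMin.hasDerivAt_eq_zero ?_ hderiv
  filter_upwards [hmin] with y hy
  rw [inner_sub_right] at hy
  linarith

theorem norm_le_inv_mul_norm_of_inner_sub_nonpos
    {H : Type*} [NormedAddCommGroup H] [InnerProductSpace ℝ H] {A : H → H} {γ : ℝ}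
    (hγ : 0 < γ) (hA : ∀ h : H, γ * ‖h‖ ^ 2 ≤ ⟪A h, h⟫) {x w : H} (hx : ⟪A x - w, x⟫ ≤ 0) :
    ‖x‖ ≤ γ⁻¹ * ‖w‖ := by
  have hsq : γ * ‖x‖ ^ 2 ≤ ‖w‖ * ‖x‖ := calc
    γ * ‖x‖ ^ 2 ≤ ⟪A x, x⟫ := hA x
    _ ≤ ⟪w, x⟫ := by rw [inner_sub_left] at hx; linarith
    _ ≤ ‖w‖ * ‖x‖ := real_inner_le_norm w x
  rw [le_inv_mul_iff₀ hγ]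
  rcases (norm_nonneg x).eq_or_lt with hx0 | hx0
  · rw [← hx0, mul_zero]
    exact norm_nonneg w
  · nlinarith

theorem sqrt_integral_norm_sq_le_mul {α E F : Type*} [MeasurableSpace α] {μ : Measure α}
    [NormedAddCommGroup E] [NormedAddCommGroup F] {f : α → E} {g : α → F} {c : ℝ}
    (hc : 0 ≤ c) (hg : MemLp g 2 μ) (h : ∀ᵐ x ∂μ, ‖f x‖ ≤ c * ‖g x‖) :
    √(∫ x, ‖f x‖ ^ 2 ∂μ) ≤ c * √(∫ x, ‖g x‖ ^ 2 ∂μ) := by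
  have hint : ∫ x, ‖f x‖ ^ 2 ∂μ ≤ c ^ 2 * ∫ x, ‖g x‖ ^ 2 ∂μ := by
    rw [← integral_const_mul]
    refine integral_mono_of_nonneg (ae_of_all _ fun x => sq_nonneg _)
      (hg.norm.integrable_sq.const_mul _) ?_
    filter_upwards [h] with x hx
    rw [← mul_pow]
    exact pow_le_pow_left₀ (norm_nonneg _) hx 2
  calc √(∫ x, ‖f x‖ ^ 2 ∂μ) ≤ √(c ^ 2 * ∫ x, ‖g x‖ ^ 2 ∂μ) := Real.sqrt_le_sqrt hint
    _ = c * √(∫ x, ‖g x‖ ^ 2 ∂μ) := by rw [Real.sqrt_mul (sq_nonneg c), Real.sqrt_sq hc]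

theorem reduced_solution_apriori_bound_general
    {H : Type*} [NormedAddCommGroup H] [InnerProductSpace ℝ H] [CompleteSpace H]
    (𝒞 : Set H) (h𝒞closed : IsClosed 𝒞)
    (A : H →L[ℝ] H)
    (γ : ℝ) (hγ : 0 < γ) (hAcoer : ∀ h : H, γ * ‖h‖ ^ 2 ≤ ⟪A h, h⟫)
    (T : ℝ) (hT : 0 < T)
    (g : ℝ → H) (hg : MemLp g 2 (volume.restrict (Set.Ioo 0 T)))
    (σ σ' : ℝ → H) (hσ : IsH1Curve T σ σ')
    (hvi : ∀ᵐ t ∂(volume.restrict (Set.Ioo 0 T)),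
      σ t ∈ 𝒞 ∧ ∀ τ ∈ 𝒞, 0 ≤ ⟪A (σ' t) - g t, τ - σ t⟫) :
    (∀ᵐ t ∂(volume.restrict (Set.Ioo 0 T)), ‖σ' t‖ ≤ γ⁻¹ * ‖g t‖) ∧
      Real.sqrt (∫ t in (0:ℝ)..T, ‖σ' t‖ ^ 2) ≤
        γ⁻¹ * Real.sqrt (∫ t in (0:ℝ)..T, ‖g t‖ ^ 2) := by
  have hmem : ∀ t ∈ Ioo 0 T, σ t ∈ 𝒞 :=
    isOpen_Ioo.forall_mem_of_ae_mem h𝒞closed ((hσ.continuousOn hT.le).mono Ioo_subset_Icc_self)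
      (hvi.mono fun _ ht => ht.1)
  have hpt : ∀ᵐ t ∂(volume.restrict (Ioo 0 T)), ‖σ' t‖ ≤ γ⁻¹ * ‖g t‖ := by
    filter_upwards [hvi, hσ.ae_hasDerivAt hT.le, ae_restrict_mem measurableSet_Ioo]
      with t hvit hderiv ht
    refine norm_le_inv_mul_norm_of_inner_sub_nonpos hγ hAcoer
      (hderiv.inner_eq_zero_of_eventually_inner_sub_nonneg ?_).le
    filter_upwards [Ioo_mem_nhds ht.1 ht.2] with y hy using hvit.2 (σ y) (hmem y hy)
  refine ⟨hpt, ?_⟩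
  simp only [intervalIntegral.integral_of_le hT.le, integral_Ioc_eq_integral_Ioo]
  exact sqrt_integral_norm_sq_le_mul (inv_nonneg.mpr hγ.le) hg hpt

/-- A priori bound for reduced solutions of the evolution variational inequality:
`‖σ'(t)‖ ≤ γ⁻¹‖g(t)‖` a.e. in `(0,T)`, and consequently
`(∫₀ᵀ‖σ'‖²)^{1/2} ≤ γ⁻¹ (∫₀ᵀ‖g‖²)^{1/2}`. -/
theorem reduced_solution_apriori_bound
    {H : Type*} [NormedAddCommGroup H] [InnerProductSpace ℝ H] [CompleteSpace H]
    (𝒞 : Set H) (h𝒞 : 𝒞.Nonempty) (h𝒞closed : IsClosed 𝒞) (h𝒞conv : Convex ℝ 𝒞)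
    (A : H →L[ℝ] H) (hAsym : ∀ x y, ⟪A x, y⟫ = ⟪x, A y⟫)
    (γ : ℝ) (hγ : 0 < γ) (hAcoer : ∀ h : H, γ * ‖h‖ ^ 2 ≤ ⟪A h, h⟫)
    (T : ℝ) (hT : 0 < T)
    (g : ℝ → H) (hg : MemLp g 2 (volume.restrict (Set.Ioo 0 T)))
    (σ σ' : ℝ → H) (hσ : IsH1Curve T σ σ')
    (hvi : ∀ᵐ t ∂(volume.restrict (Set.Ioo 0 T)),
      σ t ∈ 𝒞 ∧ ∀ τ ∈ 𝒞, 0 ≤ ⟪A (σ' t) - g t, τ - σ t⟫) :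
    (∀ᵐ t ∂(volume.restrict (Set.Ioo 0 T)), ‖σ' t‖ ≤ γ⁻¹ * ‖g t‖) ∧
      Real.sqrt (∫ t in (0:ℝ)..T, ‖σ' t‖ ^ 2) ≤
        γ⁻¹ * Real.sqrt (∫ t in (0:ℝ)..T, ‖g t‖ ^ 2) :=
  reduced_solution_apriori_bound_general 𝒞 h𝒞closed A γ hγ hAcoer T hT g hg σ σ' hσ hvi
end

section
/- Let X be a real normed space, A ⊆ X a convex set, and δ > 0 such that the closed ball of radius δ around 0 is contained in A. Let ε ∈ (0,1), a ∈ A, and w ∈ X with ‖w − (1−ε)a‖ ≤ εδ/2. Then (1 − ε/2)⁻¹ w ∈ A. -/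
open Metric Pointwise

theorem Convex.closedBall_smul_subset_add_smul {X : Type*} [NormedAddCommGroup X]
    [NormedSpace ℝ X] {A : Set X} (hA : Convex ℝ A) {δ : ℝ} (hball : closedBall (0 : X) δ ⊆ A)
    {a : X} (ha : a ∈ A) {s t : ℝ} (hs : 0 ≤ s) (ht : 0 < t) :
    closedBall (s • a) (t * δ) ⊆ (s + t) • A := by
  intro x hx
  rw [hA.add_smul hs ht.le, ← add_sub_cancel (s • a) x, ← smul_inv_smul₀ ht.ne' (x - s • a)]
  refine Set.add_mem_add (Set.smul_mem_smul_set ha) (Set.smul_mem_smul_set (hball ?_))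
  rw [mem_closedBall_zero_iff, norm_smul, norm_inv, Real.norm_of_nonneg ht.le,
    inv_mul_le_iff₀ ht, ← dist_eq_norm]
  exact hx

theorem shrunken_approximant_mem_convex_general
    {X : Type*} [NormedAddCommGroup X] [NormedSpace ℝ X]
    (A : Set X) (hAconv : Convex ℝ A)
    (δ : ℝ) (hball : Metric.closedBall (0 : X) δ ⊆ A)
    (ε : ℝ) (hε0 : 0 < ε) (hε1 : ε < 1)
    (a : X) (ha : a ∈ A)
    (w : X) (hw : ‖w - (1 - ε) • a‖ ≤ ε * δ / 2) :
    (1 - ε / 2)⁻¹ • w ∈ A := by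
  have hw_ball : w ∈ closedBall ((1 - ε) • a) (ε / 2 * δ) :=
    mem_closedBall_iff_norm.mpr (by linarith)
  have hw_smul : w ∈ (1 - ε / 2) • A := by
    convert hAconv.closedBall_smul_subset_add_smul hball ha (by linarith) (half_pos hε0) hw_ball
      using 2
    ring
  exact (Set.mem_smul_set_iff_inv_smul_mem₀ (by linarith) A w).mp hw_smul

/-- Pointwise step of the appendix density lemma: if the closed ball of radius `δ`
around `0` is contained in the convex set `A`, `ε ∈ (0,1)`, `a ∈ A`, and
`‖w − (1−ε)a‖ ≤ εδ/2`, then `(1 − ε/2)⁻¹ w ∈ A`. -/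
theorem shrunken_approximant_mem_convex
    {X : Type*} [NormedAddCommGroup X] [NormedSpace ℝ X]
    (A : Set X) (hAconv : Convex ℝ A)
    (δ : ℝ) (hδ : 0 < δ) (hball : Metric.closedBall (0 : X) δ ⊆ A)
    (ε : ℝ) (hε0 : 0 < ε) (hε1 : ε < 1)
    (a : X) (ha : a ∈ A)
    (w : X) (hw : ‖w - (1 - ε) • a‖ ≤ ε * δ / 2) :
    (1 - ε / 2)⁻¹ • w ∈ A :=
  shrunken_approximant_mem_convex_general A hAconv δ hball ε hε0 hε1 a ha w hw
end
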